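/- Let G be a group acting on a set X, let φ ∈ G, and suppose every nonzero power of φ has fixed-point set exactly {p, q} ⊆ X with p ≠ q. Then the commensurator of the cyclic subgroup ⟨φ⟩ in G is contained in the setwise stabilizer of {p, q} in G. -/

import Mathlib

/-!
Conjugation by a commensurating element `g` carries some nonzero power `φ ^ m` to a nonzero power
`φ ^ n`, and `g` maps the fixed-point set of `φ ^ m` onto that of `g * φ ^ m * g⁻¹ = φ ^ n`. Both
fixed-point sets are `{p, q}`, so `g` preserves `{p, q}`.
-/

open Pointwise MulAction Subgroup

theorem Subgroup.exists_conj_zpow_eq_zpow_of_mem_commensurator {G : Type*} [Group G] {φ g : G}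
    (hg : g ∈ Commensurable.commensurator (zpowers φ)) :
    ∃ m n : ℤ, m ≠ 0 ∧ n ≠ 0 ∧ g * φ ^ m * g⁻¹ = φ ^ n := by
  rw [Commensurable.commensurator_mem_iff] at hg
  obtain ⟨k, hk, -, hmem, -⟩ := exists_pow_mem_of_relIndex_ne_zero hg.1 (mem_zpowers φ)
  obtain ⟨_, ⟨m, rfl⟩, hconj⟩ := mem_smul_pointwise_iff_exists _ _ _ |>.mp hmem
  rw [ConjAct.toConjAct_smul] at hconj
  have hk' : (k : ℤ) ≠ 0 := by exact_mod_cast hk.ne'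
  by_cases hm : m = 0
  · have hφk : φ ^ (k : ℤ) = 1 := by simpa [hm] using hconj.symm
    exact ⟨k, k, hk', hk', by simp [hφk]⟩
  · exact ⟨m, k, hm, hk', by rw [hconj, zpow_natCast]⟩

theorem MulAction.smul_eq_of_mem_commensurator {G X : Type*} [Group G] [MulAction G X]
    {φ g : G} {S : Set X} (hFix : ∀ n : ℤ, n ≠ 0 → fixedBy X (φ ^ n) = S)
    (hg : g ∈ Commensurable.commensurator (zpowers φ)) : g • S = S := by
  obtain ⟨m, n, hm, hn, hconj⟩ := exists_conj_zpow_eq_zpow_of_mem_commensurator hg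
  rw [← hFix m hm, smul_fixedBy, hconj, hFix m hm, hFix n hn]

theorem stmt11_general {G X : Type*} [Group G] [MulAction G X]
    (φ : G) (p q : X)
    (hFix : ∀ n : ℤ, n ≠ 0 → {x : X | φ ^ n • x = x} = {p, q}) :
    ∀ g ∈ Subgroup.Commensurable.commensurator (Subgroup.zpowers φ),
      ({g • p, g • q} : Set X) = {p, q} := by
  intro g hg
  simpa only [Set.smul_set_insert, Set.smul_set_singleton] using
    smul_eq_of_mem_commensurator hFix hg

theorem stmt11 {G X : Type*} [Group G] [MulAction G X]
    (φ : G) (p q : X) (hpq : p ≠ q)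
    (hFix : ∀ n : ℤ, n ≠ 0 → {x : X | φ ^ n • x = x} = {p, q}) :
    ∀ g ∈ Subgroup.Commensurable.commensurator (Subgroup.zpowers φ),
      ({g • p, g • q} : Set X) = {p, q} :=
  stmt11_general φ p q hFix
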